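/- Fix d ≥ 1 and work in the algebra M of d×d complex matrices with the operator (or any submultiplicative) norm and matrix exponential exp. Then the function of a pair of matrices (W, W') ↦ (1/2)(exp W + exp W') − exp((W + W')/2) − (1/4)(W² + W'²) + (1/8)(W + W')² is O(‖(W, W')‖³) as (W, W') → (0, 0) in M × M. In particular, (1/2)(exp W + exp W') − exp((W + W')/2) agrees with (1/4)(W² + W'²) − (1/8)(W + W')² up to a remainder of third order in the size of W and W'. -/

import Mathlib

/-!
With `R x = exp x - (1 + x + x² / 2)` the second-order Taylor remainder of `exp`, the expression
equals `(R W + R W') / 2 - R ((W + W') / 2)` identically: the constant and linear terms cancel and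
the quadratic ones are exactly those subtracted. Analyticity of `exp` at `0` gives
`R x = O(‖x‖³)`, and the three arguments of `R` depend linearly on `(W, W')`.
-/

open Matrix Asymptotics Filter NormedSpace

attribute [local instance] Matrix.linftyOpNormedRing Matrix.linftyOpNormedAlgebra

section ExpQuadraticRemainder

variable (𝕂 : Type*) {𝔸 : Type*}

noncomputable def expQuadraticRemainder [Field 𝕂] [Ring 𝔸] [Algebra 𝕂 𝔸] [TopologicalSpace 𝔸]
    [IsTopologicalRing 𝔸] (x : 𝔸) : 𝔸 :=
  exp x - (1 + x + (2⁻¹ : 𝕂) • x ^ 2)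

theorem expQuadraticRemainder_isBigO [NontriviallyNormedField 𝕂] [CharZero 𝕂]
    [ContinuousSMul ℚ 𝕂] [NormedRing 𝔸] [NormedAlgebra 𝕂 𝔸] [CompleteSpace 𝔸] :
    expQuadraticRemainder 𝕂 =O[nhds 0] fun x : 𝔸 => ‖x‖ ^ 3 := by
  refine ((exp_hasFPowerSeriesAt_zero (𝕂 := 𝕂) (𝔸 := 𝔸)).isBigO_sub_partialSum_pow 3).congr_left
    fun x => ?_
  simp [expQuadraticRemainder, FormalMultilinearSeries.partialSum, Finset.sum_range_succ,
    expSeries_apply_eq, Nat.factorial]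

theorem average_exp_sub_exp_average_eq_expQuadraticRemainder [Field 𝕂] [CharZero 𝕂] [Ring 𝔸]
    [Algebra 𝕂 𝔸] [TopologicalSpace 𝔸] [IsTopologicalRing 𝔸] (a b : 𝔸) :
    (1 / 2 : 𝕂) • (exp a + exp b) - exp ((1 / 2 : 𝕂) • (a + b))
        - (1 / 4 : 𝕂) • (a ^ 2 + b ^ 2) + (1 / 8 : 𝕂) • (a + b) ^ 2
      = (1 / 2 : 𝕂) • (expQuadraticRemainder 𝕂 a + expQuadraticRemainder 𝕂 b)
        - expQuadraticRemainder 𝕂 ((1 / 2 : 𝕂) • (a + b)) := by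
  simp only [expQuadraticRemainder, smul_pow]
  norm_num
  module

end ExpQuadraticRemainder

theorem Asymptotics.IsBigO.comp_continuousLinearMap_of_norm_pow {𝕜 E F G : Type*}
    [NontriviallyNormedField 𝕜] [NormedAddCommGroup E] [NormedSpace 𝕜 E]
    [NormedAddCommGroup F] [NormedSpace 𝕜 F] [Norm G] {f : E → G} {n : ℕ}
    (hf : f =O[nhds 0] fun x => ‖x‖ ^ n) (L : F →L[𝕜] E) :
    (fun y => f (L y)) =O[nhds 0] fun y => ‖y‖ ^ n :=
  (hf.comp_tendsto (L.continuous.tendsto' 0 0 L.map_zero)).trans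
    ((L.isBigO_id _).norm_norm.pow n)

theorem average_exp_minus_exp_average_quadratic_expansion
    (d : ℕ) :
    (fun p : Matrix (Fin d) (Fin d) ℂ × Matrix (Fin d) (Fin d) ℂ =>
        (1 / 2 : ℂ) • (exp p.1 + exp p.2) - exp ((1 / 2 : ℂ) • (p.1 + p.2))
          - (1 / 4 : ℂ) • (p.1 ^ 2 + p.2 ^ 2) + (1 / 8 : ℂ) • (p.1 + p.2) ^ 2)
      =O[nhds 0] fun p => ‖p‖ ^ 3 := by
  set A := Matrix (Fin d) (Fin d) ℂ
  have hR := expQuadraticRemainder_isBigO ℂ (𝔸 := A)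
  have h₁ := hR.comp_continuousLinearMap_of_norm_pow (ContinuousLinearMap.fst ℂ A A)
  have h₂ := hR.comp_continuousLinearMap_of_norm_pow (ContinuousLinearMap.snd ℂ A A)
  have h₃ := hR.comp_continuousLinearMap_of_norm_pow
    ((1 / 2 : ℂ) • (ContinuousLinearMap.fst ℂ A A + ContinuousLinearMap.snd ℂ A A))
  refine (((h₁.add h₂).const_smul_left (1 / 2 : ℂ)).sub h₃).congr_left fun p => ?_
  exact (average_exp_sub_exp_average_eq_expQuadraticRemainder ℂ p.1 p.2).symm
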